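/- arXiv:1007.0063 — 4 statements merged into one kernel-verified Lean document; each statement's English description precedes it below -/
import Mathlib

section
/- Let n be a natural number and let f : ℝⁿ → ℝⁿ be a C¹ diffeomorphism (f is bijective, and both f and its inverse are continuously differentiable). Let φ : ℝⁿ → [0,∞] be a Borel measurable function and let μ be the measure with density φ with respect to Lebesgue measure (μ = volume.withDensity φ). If μ is invariant under f (the pushforward of μ by f equals μ), then for Lebesgue-almost every x ∈ ℝⁿ one has φ(f(x)) · |det Df(x)| = φ(x), where Df(x) denotes the (Fréchet) derivative of f at x. -/
open MeasureTheory
open scoped ENNReal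

/-! Pulling the density `φ` back along an injective differentiable map `f` and weighting it by the
Jacobian `|det Df|` yields, by the change of variables formula, the density of the pullback measure
`comap f (volume.withDensity φ)`. Invariance of `volume.withDensity φ` under `f` says that this
pullback is `volume.withDensity φ` again, and two densities of the same σ-finite measure agree
almost everywhere. -/

namespace MeasureTheory.Measure

variable {E : Type*} [NormedAddCommGroup E] [NormedSpace ℝ E] [FiniteDimensional ℝ E]
  [MeasurableSpace E] [BorelSpace E] (μ : Measure E) [μ.IsAddHaarMeasure] {f : E → E}

theorem withDensity_abs_det_fderiv_mul_comp_eq_comap {f' : E → E →L[ℝ] E}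
    (hf' : ∀ x, HasFDerivAt f (f' x) x) (hinj : Function.Injective f) (φ : E → ℝ≥0∞) :
    μ.withDensity (fun x => ENNReal.ofReal |(f' x).det| * φ (f x)) =
      (μ.withDensity φ).comap f := by
  have hf'univ : ∀ s : Set E, ∀ x ∈ s, HasFDerivWithinAt f (f' x) s x :=
    fun _ x _ => (hf' x).hasFDerivWithinAt
  have himage (s : Set E) (hs : MeasurableSet s) : MeasurableSet (f '' s) :=
    measurable_image_of_fderivWithin hs (hf'univ s) hinj.injOn
  ext s hs
  rw [comap_apply f hinj himage _ hs, withDensity_apply _ hs, withDensity_apply _ (himage s hs),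
    lintegral_image_eq_lintegral_abs_det_fderiv_mul μ hs (hf'univ s) hinj.injOn]

theorem ae_comp_mul_abs_det_fderiv_eq_of_map_withDensity_eq (hf : Differentiable ℝ f)
    (hinj : Function.Injective f) {φ : E → ℝ≥0∞} (hφ : Measurable φ)
    (hinv : (μ.withDensity φ).map f = μ.withDensity φ) :
    ∀ᵐ x ∂μ, φ (f x) * ENNReal.ofReal |(fderiv ℝ f x).det| = φ x := by
  have hjac : Measurable fun x => ENNReal.ofReal |(fderiv ℝ f x).det| :=
    ENNReal.measurable_ofReal.comp <| measurable_abs.comp <|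
      ContinuousLinearMap.continuous_det.measurable.comp (measurable_fderiv ℝ f)
  have hdensity : μ.withDensity (fun x => ENNReal.ofReal |(fderiv ℝ f x).det| * φ (f x)) =
      μ.withDensity φ := by
    rw [withDensity_abs_det_fderiv_mul_comp_eq_comap μ (fun x => (hf x).hasFDerivAt) hinj]
    conv_rhs => rw [← (hf.continuous.measurableEmbedding hinj).comap_map (μ.withDensity φ), hinv]
  filter_upwards [(withDensity_eq_iff_of_sigmaFinite
    (hjac.mul (hφ.comp hf.continuous.measurable)).aemeasurable hφ.aemeasurable).1 hdensity]
    with x hx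
  rwa [mul_comm]

end MeasureTheory.Measure

theorem acip_density_cocycle_general (n : ℕ)
    (f : EuclideanSpace ℝ (Fin n) → EuclideanSpace ℝ (Fin n))
    (hbij : Function.Bijective f)
    (hf : ContDiff ℝ 1 f)
    (φ : EuclideanSpace ℝ (Fin n) → ℝ≥0∞)
    (hφ : Measurable φ)
    (hinv : Measure.map f (volume.withDensity φ) = volume.withDensity φ) :
    ∀ᵐ x ∂(volume : Measure (EuclideanSpace ℝ (Fin n))),
      φ (f x) * ENNReal.ofReal |(fderiv ℝ f x).det| = φ x :=
  Measure.ae_comp_mul_abs_det_fderiv_eq_of_map_withDensity_eq volume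
    (hf.differentiable one_ne_zero) hbij.injective hφ hinv

/-- The almost-everywhere cocycle equation `φ(f x) · |det Df(x)| = φ(x)` satisfied by the
density `φ` of an absolutely continuous invariant measure of a `C¹` diffeomorphism of `ℝⁿ`. -/
theorem acip_density_cocycle (n : ℕ)
    (f : EuclideanSpace ℝ (Fin n) → EuclideanSpace ℝ (Fin n))
    (hbij : Function.Bijective f)
    (hf : ContDiff ℝ 1 f)
    (hfinv : ContDiff ℝ 1 (Function.invFun f))
    (φ : EuclideanSpace ℝ (Fin n) → ℝ≥0∞)
    (hφ : Measurable φ)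
    (hinv : Measure.map f (volume.withDensity φ) = volume.withDensity φ) :
    ∀ᵐ x ∂(volume : Measure (EuclideanSpace ℝ (Fin n))),
      φ (f x) * ENNReal.ofReal |(fderiv ℝ f x).det| = φ x :=
  acip_density_cocycle_general n f hbij hf φ hφ hinv
end

section
/- Let n be a natural number and let f : ℝⁿ → ℝⁿ be a C¹ diffeomorphism (f is bijective, and both f and its inverse are continuously differentiable). Let φ : ℝⁿ → [0,∞] be a Borel measurable function and let μ = volume.withDensity φ be invariant under f (Measure.map f μ = μ). Then for every natural number k ≥ 1, for Lebesgue-almost every x ∈ ℝⁿ one has φ(f^[k](x)) · |det D(f^[k])(x)| = φ(x), where f^[k] denotes the k-th iterate of f and D(f^[k])(x) its derivative at x. -/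
/-! For every measurable `s`, the change of variables formula for the injective differentiable
map `g = fᵏ` rewrites `∫_s φ ∘ g · |det Dg|` as `∫_{g(s)} φ = μ (g(s))`, and invariance of
`μ = volume.withDensity φ` under `g` turns this into `μ (g⁻¹(g(s))) = μ s = ∫_s φ`. Two
measurable densities with equal integrals over every measurable set agree almost everywhere. -/

open MeasureTheory Function
open scoped ENNReal

section

variable {E : Type*} [NormedAddCommGroup E] [NormedSpace ℝ E] [FiniteDimensional ℝ E]
  [MeasurableSpace E] [BorelSpace E] {μ : Measure E} [μ.IsAddHaarMeasure]
  {g : E → E} {φ : E → ℝ≥0∞}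

theorem setLIntegral_comp_mul_abs_det_fderiv_eq_of_measurePreserving
    (hg : MeasurePreserving g (μ.withDensity φ) (μ.withDensity φ)) (hinj : Injective g)
    (hdiff : Differentiable ℝ g) {s : Set E} (hs : MeasurableSet s) :
    ∫⁻ x in s, φ (g x) * ENNReal.ofReal |(fderiv ℝ g x).det| ∂μ = ∫⁻ x in s, φ x ∂μ := by
  have hderiv : ∀ x ∈ s, HasFDerivWithinAt g (fderiv ℝ g x) s x :=
    fun x _ => (hdiff x).hasFDerivAt.hasFDerivWithinAt
  have himage : MeasurableSet (g '' s) := measurable_image_of_fderivWithin hs hderiv hinj.injOn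
  calc ∫⁻ x in s, φ (g x) * ENNReal.ofReal |(fderiv ℝ g x).det| ∂μ
      = ∫⁻ x in g '' s, φ x ∂μ := by
        simp_rw [lintegral_image_eq_lintegral_abs_det_fderiv_mul μ hs hderiv hinj.injOn, mul_comm]
    _ = μ.withDensity φ (g ⁻¹' (g '' s)) := by
        rw [hg.measure_preimage himage.nullMeasurableSet, withDensity_apply _ himage]
    _ = ∫⁻ x in s, φ x ∂μ := by rw [hinj.preimage_image, withDensity_apply _ hs]

theorem ae_comp_mul_abs_det_fderiv_eq_of_measurePreserving (hφ : Measurable φ)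
    (hg : MeasurePreserving g (μ.withDensity φ) (μ.withDensity φ)) (hinj : Injective g)
    (hdiff : Differentiable ℝ g) :
    ∀ᵐ x ∂μ, φ (g x) * ENNReal.ofReal |(fderiv ℝ g x).det| = φ x := by
  have hmeas : Measurable fun x => φ (g x) * ENNReal.ofReal |(fderiv ℝ g x).det| :=
    (hφ.comp hg.measurable).mul
      (ContinuousLinearMap.continuous_det.measurable.comp (measurable_fderiv ℝ g)).abs.ennreal_ofReal
  exact ae_eq_of_forall_setLIntegral_eq_of_sigmaFinite hmeas hφ fun s hs _ =>
    setLIntegral_comp_mul_abs_det_fderiv_eq_of_measurePreserving hg hinj hdiff hs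

end

theorem acip_density_cocycle_iterate_general (n : ℕ)
    (f : EuclideanSpace ℝ (Fin n) → EuclideanSpace ℝ (Fin n))
    (hbij : Function.Bijective f)
    (hf : ContDiff ℝ 1 f)
    (φ : EuclideanSpace ℝ (Fin n) → ℝ≥0∞)
    (hφ : Measurable φ)
    (hinv : Measure.map f (volume.withDensity φ) = volume.withDensity φ)
    (k : ℕ) :
    ∀ᵐ x ∂(volume : Measure (EuclideanSpace ℝ (Fin n))),
      φ (f^[k] x) * ENNReal.ofReal |(fderiv ℝ (f^[k]) x).det| = φ x := by
  have hf_preserving : MeasurePreserving f (volume.withDensity φ) (volume.withDensity φ) :=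
    ⟨hf.continuous.measurable, hinv⟩
  exact ae_comp_mul_abs_det_fderiv_eq_of_measurePreserving hφ (hf_preserving.iterate k)
    (hbij.1.iterate k) ((hf.differentiable one_ne_zero).iterate k)

/-- The iterated almost-everywhere cocycle equation `φ(fᵏ x) · |det D(fᵏ)(x)| = φ(x)`
satisfied by the density `φ` of an absolutely continuous invariant measure of a `C¹`
diffeomorphism of `ℝⁿ`. -/
theorem acip_density_cocycle_iterate (n : ℕ)
    (f : EuclideanSpace ℝ (Fin n) → EuclideanSpace ℝ (Fin n))
    (hbij : Function.Bijective f)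
    (hf : ContDiff ℝ 1 f)
    (hfinv : ContDiff ℝ 1 (Function.invFun f))
    (φ : EuclideanSpace ℝ (Fin n) → ℝ≥0∞)
    (hφ : Measurable φ)
    (hinv : Measure.map f (volume.withDensity φ) = volume.withDensity φ)
    (k : ℕ) (hk : 1 ≤ k) :
    ∀ᵐ x ∂(volume : Measure (EuclideanSpace ℝ (Fin n))),
      φ (f^[k] x) * ENNReal.ofReal |(fderiv ℝ (f^[k]) x).det| = φ x :=
  acip_density_cocycle_iterate_general n f hbij hf φ hφ hinv k
end

section
/- Let n be a natural number and let f : ℝⁿ → ℝⁿ be a C¹ diffeomorphism (f is bijective, and both f and its inverse are continuously differentiable). Let φ : ℝⁿ → ℝ be a continuous function with φ(x) > 0 for all x, and suppose the measure μ = volume.withDensity (fun x => ENNReal.ofReal (φ x)) is invariant under f (Measure.map f μ = μ). If p ∈ ℝⁿ is a periodic point of f of period k ≥ 1 (i.e., f^[k](p) = p), then |det D(f^[k])(p)| = 1. -/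
/-!
Change of variables turns invariance of `ρ • volume` under an injective `C¹` map `g` into
`ρ(x) = |det Dg(x)| ρ(g x)` almost everywhere, and continuity of both sides makes this hold
everywhere. At a fixed point `p` of `g = f^[k]` it reads `ρ(p) = |det Dg(p)| ρ(p)` with `ρ(p) > 0`.
-/

open MeasureTheory Function
open scoped ENNReal

theorem ContDiff.iterate {𝕜 E : Type*} [NontriviallyNormedField 𝕜] [NormedAddCommGroup E]
    [NormedSpace 𝕜 E] {n : WithTop ℕ∞} {f : E → E} (hf : ContDiff 𝕜 n f) (k : ℕ) :
    ContDiff 𝕜 n f^[k] := by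
  induction k with
  | zero => exact contDiff_id
  | succ k ih => rw [iterate_succ']; exact hf.comp ih

section ChangeOfVariables

variable {E : Type*} [NormedAddCommGroup E] [NormedSpace ℝ E] [FiniteDimensional ℝ E]
  [MeasurableSpace E] [BorelSpace E] (μ : Measure E) [μ.IsAddHaarMeasure]
  {g : E → E} {ρ : E → ℝ≥0∞}

theorem setLIntegral_eq_setLIntegral_abs_det_fderiv_mul_of_map_withDensity
    (hg : Differentiable ℝ g) (hinj : Injective g)
    (hmap : Measure.map g (μ.withDensity ρ) = μ.withDensity ρ) {s : Set E} (hs : MeasurableSet s) :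
    ∫⁻ x in s, ρ x ∂μ = ∫⁻ x in s, ENNReal.ofReal |(fderiv ℝ g x).det| * ρ (g x) ∂μ := by
  -- Lusin–Souslin: no continuity of the inverse is needed.
  have himage : MeasurableSet (g '' s) :=
    hs.image_of_continuousOn_injOn hg.continuous.continuousOn hinj.injOn
  have hmeasure : μ.withDensity ρ (g '' s) = μ.withDensity ρ s := by
    conv_lhs => rw [← hmap]
    rw [Measure.map_apply hg.continuous.measurable himage, hinj.preimage_image]
  rw [← lintegral_image_eq_lintegral_abs_det_fderiv_mul μ hs
      (fun x _ ↦ (hg x).hasFDerivAt.hasFDerivWithinAt) hinj.injOn, ← withDensity_apply _ hs,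
    ← withDensity_apply _ himage, hmeasure]

theorem ae_eq_abs_det_fderiv_mul_of_map_withDensity
    (hg : Differentiable ℝ g) (hinj : Injective g) (hρ : Measurable ρ)
    (hmap : Measure.map g (μ.withDensity ρ) = μ.withDensity ρ) :
    ρ =ᵐ[μ] fun x ↦ ENNReal.ofReal |(fderiv ℝ g x).det| * ρ (g x) := by
  refine ae_eq_of_forall_setLIntegral_eq_of_sigmaFinite hρ ?_ fun s hs _ ↦
    setLIntegral_eq_setLIntegral_abs_det_fderiv_mul_of_map_withDensity μ hg hinj hmap hs
  exact ((ContinuousLinearMap.continuous_det.measurable.comp (measurable_fderiv ℝ g)).abs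
    |>.ennreal_ofReal).mul (hρ.comp hg.continuous.measurable)

theorem ofReal_eq_ofReal_abs_det_fderiv_mul_of_map_withDensity {φ : E → ℝ}
    (hg : ContDiff ℝ 1 g) (hinj : Injective g) (hφ : Continuous φ)
    (hmap : Measure.map g (μ.withDensity fun x ↦ ENNReal.ofReal (φ x)) =
      μ.withDensity fun x ↦ ENNReal.ofReal (φ x)) (x : E) :
    ENNReal.ofReal (φ x) = ENNReal.ofReal (|(fderiv ℝ g x).det| * φ (g x)) := by
  have hdensity := ae_eq_abs_det_fderiv_mul_of_map_withDensity μ (hg.differentiable one_ne_zero)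
    hinj (ENNReal.continuous_ofReal.comp hφ).measurable hmap
  replace hdensity := hdensity.trans <| .of_forall fun y ↦ (ENNReal.ofReal_mul (abs_nonneg _)).symm
  refine congrFun ((Continuous.ae_eq_iff_eq μ ?_ ?_).1 hdensity) x
  · exact ENNReal.continuous_ofReal.comp hφ
  · exact ENNReal.continuous_ofReal.comp <|
      (ContinuousLinearMap.continuous_det.comp (hg.continuous_fderiv one_ne_zero)).abs.mul
        (hφ.comp hg.continuous)

theorem abs_det_fderiv_eq_one_of_map_withDensity_of_isFixedPt {φ : E → ℝ}
    (hg : ContDiff ℝ 1 g) (hinj : Injective g) (hφ : Continuous φ)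
    (hmap : Measure.map g (μ.withDensity fun x ↦ ENNReal.ofReal (φ x)) =
      μ.withDensity fun x ↦ ENNReal.ofReal (φ x))
    {p : E} (hp : IsFixedPt g p) (hφp : 0 < φ p) :
    |(fderiv ℝ g p).det| = 1 := by
  have h := ofReal_eq_ofReal_abs_det_fderiv_mul_of_map_withDensity μ hg hinj hφ hmap p
  rw [hp.eq, ENNReal.ofReal_eq_ofReal_iff hφp.le (by positivity)] at h
  exact (mul_eq_right₀ hφp.ne').1 h.symm

end ChangeOfVariables

theorem jacobian_eq_one_of_periodic_of_acip_general (n : ℕ)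
    (f : EuclideanSpace ℝ (Fin n) → EuclideanSpace ℝ (Fin n))
    (hbij : Function.Bijective f)
    (hf : ContDiff ℝ 1 f)
    (φ : EuclideanSpace ℝ (Fin n) → ℝ)
    (hφc : Continuous φ)
    (hφpos : ∀ x, 0 < φ x)
    (hinv : Measure.map f (volume.withDensity (fun x => ENNReal.ofReal (φ x)))
      = volume.withDensity (fun x => ENNReal.ofReal (φ x)))
    (p : EuclideanSpace ℝ (Fin n)) (k : ℕ)
    (hp : f^[k] p = p) :
    |(fderiv ℝ (f^[k]) p).det| = 1 :=
  have hpreserving : MeasurePreserving f _ _ := ⟨hf.continuous.measurable, hinv⟩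
  abs_det_fderiv_eq_one_of_map_withDensity_of_isFixedPt volume (hf.iterate k) (hbij.1.iterate k)
    hφc (hpreserving.iterate k).map_eq hp (hφpos p)

/-- If a `C¹` diffeomorphism of `ℝⁿ` preserves a measure with continuous positive density
with respect to Lebesgue measure, then at every periodic point `p` of period `k ≥ 1` the
Jacobian of the return map `f^[k]` has absolute value `1`. -/
theorem jacobian_eq_one_of_periodic_of_acip (n : ℕ)
    (f : EuclideanSpace ℝ (Fin n) → EuclideanSpace ℝ (Fin n))
    (hbij : Function.Bijective f)
    (hf : ContDiff ℝ 1 f)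
    (hfinv : ContDiff ℝ 1 (Function.invFun f))
    (φ : EuclideanSpace ℝ (Fin n) → ℝ)
    (hφc : Continuous φ)
    (hφpos : ∀ x, 0 < φ x)
    (hinv : Measure.map f (volume.withDensity (fun x => ENNReal.ofReal (φ x)))
      = volume.withDensity (fun x => ENNReal.ofReal (φ x)))
    (p : EuclideanSpace ℝ (Fin n)) (k : ℕ) (hk : 1 ≤ k)
    (hp : f^[k] p = p) :
    |(fderiv ℝ (f^[k]) p).det| = 1 :=
  jacobian_eq_one_of_periodic_of_acip_general n f hbij hf φ hφc hφpos hinv p k hp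
end

section
/- Let (X, 𝒜, m) be a measure space and let f : X → X be a measurable bijection with measurable inverse such that the pushforward measure m.map f is absolutely continuous with respect to m. Let φ : X → [0,∞] be measurable, let μ = m.withDensity φ, and suppose μ is invariant under f (Measure.map f μ = μ). Let E = { x ∈ X : φ(x) ≠ 0 }. Then the symmetric difference of E and f⁻¹(E) is an m-null set: m((E \ f⁻¹(E)) ∪ (f⁻¹(E) \ E)) = 0. -/
open MeasureTheory
open scoped ENNReal

/-- If `f` is a measurable bijection with measurable inverse `g` whose pushforward of `m` is
absolutely continuous with respect to `m`, and `μ = m.withDensity φ` is `f`-invariant, then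
the set `E = {φ ≠ 0}` where the density is positive is invariant under `f` up to `m`-null
sets: the symmetric difference of `E` and `f⁻¹(E)` is `m`-null. -/
theorem density_support_invariant_mod_null
    {X : Type*} [MeasurableSpace X] (m : Measure X) (f g : X → X)
    (hf : Measurable f) (hg : Measurable g)
    (hgf : Function.LeftInverse g f) (hfg : Function.RightInverse g f)
    (hac : Measure.map f m ≪ m)
    (φ : X → ℝ≥0∞) (hφ : Measurable φ)
    (hinv : Measure.map f (m.withDensity φ) = m.withDensity φ) :
    m (({x | φ x ≠ 0} \ f ⁻¹' {x | φ x ≠ 0}) ∪ (f ⁻¹' {x | φ x ≠ 0} \ {x | φ x ≠ 0})) = 0 := by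
  set E : Set X := {x | φ x ≠ 0} with hEdef
  set μ : Measure X := m.withDensity φ with hμdef
  have hE : MeasurableSet E := (hφ (measurableSet_singleton 0)).compl
  have hinv' : ∀ A : Set X, MeasurableSet A → μ (f ⁻¹' A) = μ A := by
    intro A hA
    conv_rhs => rw [← hinv]
    rw [Measure.map_apply hf hA]
  -- any subset of Eᶜ is μ-null
  have hnullc : ∀ s : Set X, s ⊆ Eᶜ → μ s = 0 := by
    intro s hs
    rw [hμdef, withDensity_apply_eq_zero hφ]
    have : {x | φ x ≠ 0} ∩ s = ∅ := by
      ext x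
      simp only [Set.mem_inter_iff, Set.mem_empty_iff_false, iff_false]
      rintro ⟨hx1, hx2⟩
      exact (hs hx2) hx1
    rw [this]; exact measure_empty
  -- any μ-null subset of E is m-null
  have hnullE : ∀ s : Set X, s ⊆ E → μ s = 0 → m s = 0 := by
    intro s hs hμs
    rw [hμdef, withDensity_apply_eq_zero hφ] at hμs
    have : {x | φ x ≠ 0} ∩ s = s := Set.inter_eq_self_of_subset_right hs
    rwa [this] at hμs
  -- Part 1: T = E \ f⁻¹ E
  set T : Set X := E \ f ⁻¹' E with hTdef
  have hT : MeasurableSet T := hE.diff (hf hE)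
  have hmT : m T = 0 := by
    refine hnullE T Set.diff_subset ?_
    have hB : MeasurableSet (g ⁻¹' T) := hg hT
    have h1 : f ⁻¹' (g ⁻¹' T) = T := by
      ext x; simp [hgf x]
    have h2 : g ⁻¹' T ⊆ Eᶜ := by
      intro x hx
      have : f (g x) ∉ E := hx.2
      rwa [hfg x] at this
    calc μ T = μ (f ⁻¹' (g ⁻¹' T)) := by rw [h1]
    _ = μ (g ⁻¹' T) := hinv' _ hB
    _ = 0 := hnullc _ h2
  -- Part 2: S = f⁻¹ E \ E
  set S : Set X := f ⁻¹' E \ E with hSdef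
  have hS : MeasurableSet S := (hf hE).diff hE
  have hmS : m S = 0 := by
    have hA : MeasurableSet (g ⁻¹' S) := hg hS
    have h1 : f ⁻¹' (g ⁻¹' S) = S := by
      ext x; simp [hgf x]
    have h2 : g ⁻¹' S ⊆ E := by
      intro x hx
      have : f (g x) ∈ E := hx.1
      rwa [hfg x] at this
    have hμA : μ (g ⁻¹' S) = 0 := by
      rw [← hinv' _ hA, h1]
      exact hnullc _ (fun x hx => hx.2)
    have hmA : m (g ⁻¹' S) = 0 := hnullE _ h2 hμA
    have := hac hmA
    rwa [Measure.map_apply hf hA, h1] at this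
  exact measure_union_null hmT hmS
end
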